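/- Let k be a field of characteristic ≠ 2 and K₃ the tiny Kaplansky superalgebra. Then K₃ is a simple Jordan superalgebra: it satisfies supercommutativity and the super Jordan identity, and has no nonzero proper graded ideals. -/

import Mathlib

section
variable (k : Type*) [Field k]

/-- The tiny Kaplansky superalgebra `K₃ = ke ⊕ (kx ⊕ ky)`, encoded as
`k × (k × k)`; coordinates `(α, β, γ) = αe + βx + γy`. -/
abbrev K3 := k × (k × k)

/-- The product of `K₃`: `e² = e`, `ex = xe = ½x`, `ey = ye = ½y`,
`xy = −yx = e`, `x² = y² = 0`. -/
def K3mul : K3 k → K3 k → K3 k :=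
  fun a b => (a.1 * b.1 + (a.2.1 * b.2.2 - a.2.2 * b.2.1),
    ((2⁻¹ : k) * (a.1 * b.2.1 + b.1 * a.2.1), (2⁻¹ : k) * (a.1 * b.2.2 + b.1 * a.2.2)))

/-- Homogeneity of parity `p` in `K₃`. -/
def K3homog (p : ℕ) (a : K3 k) : Prop :=
  if p % 2 = 0 then a.2 = 0 else a.1 = 0

set_option maxHeartbeats 2000000

/-- Over a field of characteristic ≠ 2, the tiny Kaplansky
superalgebra `K₃` is a simple Jordan superalgebra: it is supercommutative,
satisfies the super Jordan identity (in linearized operator form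
`Σ_cyc (−1)^{|x||z|}[L_{x∘y}, L_z] = 0` on homogeneous elements), and has no
graded ideals other than `0` and `K₃`. -/
theorem K3_simple_Jordan_superalgebra (h2 : (2 : k) ≠ 0) :
    -- supercommutativity
    (∀ (p r : ℕ) (x y : K3 k), K3homog k p x → K3homog k r y →
      K3mul k x y = ((-1 : k) ^ (p * r)) • K3mul k y x) ∧
    -- super Jordan identity
    (∀ (px py pz : ℕ) (x y z : K3 k), K3homog k px x → K3homog k py y →
      K3homog k pz z → ∀ w : K3 k,
      ((-1 : k) ^ (px * pz)) •
        (K3mul k (K3mul k x y) (K3mul k z w)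
          - ((-1 : k) ^ ((px + py) * pz)) • K3mul k z (K3mul k (K3mul k x y) w))
      + ((-1 : k) ^ (py * px)) •
        (K3mul k (K3mul k y z) (K3mul k x w)
          - ((-1 : k) ^ ((py + pz) * px)) • K3mul k x (K3mul k (K3mul k y z) w))
      + ((-1 : k) ^ (pz * py)) •
        (K3mul k (K3mul k z x) (K3mul k y w)
          - ((-1 : k) ^ ((pz + px) * py)) • K3mul k y (K3mul k (K3mul k z x) w))
      = 0) ∧
    -- simplicity: no proper nonzero graded ideals
    (∀ I : Submodule k (K3 k),
      (∀ a ∈ I, ∀ x : K3 k, K3mul k a x ∈ I) →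
      (∀ a ∈ I, ((a.1, 0) : K3 k) ∈ I ∧ ((0, a.2) : K3 k) ∈ I) →
      I = ⊥ ∨ I = ⊤) := by
  refine ⟨?_, ?_, ?_⟩
  · -- supercommutativity
    intro p r x y hx hy
    rw [neg_one_pow_eq_pow_mod_two, Nat.mul_mod]
    obtain ⟨x1, x2, x3⟩ := x
    obtain ⟨y1, y2, y3⟩ := y
    rcases Nat.mod_two_eq_zero_or_one p with hp | hp <;>
      rcases Nat.mod_two_eq_zero_or_one r with hr | hr <;>
      simp only [K3homog, hp, hr, one_ne_zero, reduceIte, Prod.mk_eq_zero] at hx hy <;>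
      simp_all [K3mul, Prod.ext_iff, Prod.smul_mk, smul_eq_mul] <;>
      ring
  · -- super Jordan identity
    intro px py pz x y z hx hy hz w
    rw [neg_one_pow_eq_pow_mod_two (px*pz), neg_one_pow_eq_pow_mod_two ((px+py)*pz),
      neg_one_pow_eq_pow_mod_two (py*px), neg_one_pow_eq_pow_mod_two ((py+pz)*px),
      neg_one_pow_eq_pow_mod_two (pz*py), neg_one_pow_eq_pow_mod_two ((pz+px)*py),
      Nat.mul_mod px pz, Nat.mul_mod (px+py) pz, Nat.mul_mod py px,
      Nat.mul_mod (py+pz) px, Nat.mul_mod pz py, Nat.mul_mod (pz+px) py,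
      Nat.add_mod px py, Nat.add_mod py pz, Nat.add_mod pz px]
    obtain ⟨x1, x2, x3⟩ := x
    obtain ⟨y1, y2, y3⟩ := y
    obtain ⟨z1, z2, z3⟩ := z
    obtain ⟨w1, w2, w3⟩ := w
    rcases Nat.mod_two_eq_zero_or_one px with hp | hp <;>
      rcases Nat.mod_two_eq_zero_or_one py with hq | hq <;>
      rcases Nat.mod_two_eq_zero_or_one pz with hr | hr <;>
      simp only [K3homog, hp, hq, hr, one_ne_zero, reduceIte, Prod.mk_eq_zero] at hx hy hz <;>
      simp only [hp, hq, hr] <;>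
      norm_num <;>
      simp_all only [K3mul, Prod.smul_mk, smul_eq_mul, Prod.mk_add_mk, Prod.mk_sub_mk,
        Prod.mk.injEq, Prod.mk_eq_zero, pow_zero, pow_one, one_mul, neg_mul, mul_neg, neg_neg] <;>
      and_intros
    all_goals field_simp
    all_goals try ring_nf
    all_goals try (
      have h256 : (256:k) ≠ 0 := by
        have := pow_ne_zero 8 h2; norm_num at this; exact this
      field_simp [h256]
      try ring)
    all_goals (
      simp only [Prod.ext_iff, Prod.fst_add, Prod.snd_add, Prod.fst_sub, Prod.snd_sub,
        Prod.fst_neg, Prod.snd_neg, Prod.fst_zero, Prod.snd_zero]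
      have h4 : (4:k) ≠ 0 := by
        have := mul_ne_zero h2 h2; norm_num at this; exact this
      have h8 : (8:k) ≠ 0 := by
        have := mul_ne_zero h4 h2; norm_num at this; exact this
      and_intros <;> field_simp [h4, h8] <;> ring)
  · -- simplicity
    intro I hmul hgr
    by_cases hbot : I = ⊥
    · exact Or.inl hbot
    right
    obtain ⟨a, haI, ha⟩ := Submodule.exists_mem_ne_zero_of_ne_bot hbot
    have he : ((1, 0) : K3 k) ∈ I := by
      have key : ∀ α : k, α ≠ 0 → ((α, 0) : K3 k) ∈ I → ((1, 0) : K3 k) ∈ I := by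
        intro α hα hm
        have := I.smul_mem α⁻¹ hm
        rwa [Prod.smul_mk, smul_zero, smul_eq_mul, inv_mul_cancel₀ hα] at this
      obtain ⟨h1, h2'⟩ := hgr a haI
      by_cases ha1 : a.1 = 0
      · have ha2 : a.2 ≠ 0 := by
          intro h
          apply ha
          have : a = (a.1, a.2) := rfl
          rw [this, ha1, h]; rfl
        by_cases hb1 : a.2.1 = 0
        · have hb2 : a.2.2 ≠ 0 := by
            intro h; exact ha2 (Prod.ext hb1 h)
          have hm := hmul _ h2' ((0, (1, 0)) : K3 k)
          have : K3mul k ((0 : k), a.2) ((0, (1, 0)) : K3 k) = ((-a.2.2, 0) : K3 k) := by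
            simp [K3mul, Prod.ext_iff]
          rw [this] at hm
          exact key _ (neg_ne_zero.mpr hb2) hm
        · have hm := hmul _ h2' ((0, (0, 1)) : K3 k)
          have : K3mul k ((0 : k), a.2) ((0, (0, 1)) : K3 k) = ((a.2.1, 0) : K3 k) := by
            simp [K3mul, Prod.ext_iff]
          rw [this] at hm
          exact key _ hb1 hm
      · exact key _ ha1 h1
    have hx : ((0, (1, 0)) : K3 k) ∈ I := by
      have hm := hmul _ he ((0, (1, 0)) : K3 k)
      have : ((2 : k)) • K3mul k ((1, 0) : K3 k) ((0, (1, 0)) : K3 k) = ((0, (1, 0)) : K3 k) := by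
        simp [K3mul, Prod.ext_iff, smul_eq_mul]
        field_simp
      exact this ▸ I.smul_mem 2 hm
    have hy : ((0, (0, 1)) : K3 k) ∈ I := by
      have hm := hmul _ he ((0, (0, 1)) : K3 k)
      have : ((2 : k)) • K3mul k ((1, 0) : K3 k) ((0, (0, 1)) : K3 k) = ((0, (0, 1)) : K3 k) := by
        simp [K3mul, Prod.ext_iff, smul_eq_mul]
        field_simp
      exact this ▸ I.smul_mem 2 hm
    rw [Submodule.eq_top_iff']
    intro v
    have hv : v = v.1 • ((1, 0) : K3 k) + v.2.1 • ((0, (1, 0)) : K3 k)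
        + v.2.2 • ((0, (0, 1)) : K3 k) := by
      obtain ⟨a, b, c⟩ := v
      simp [Prod.ext_iff, smul_eq_mul]
    rw [hv]
    exact I.add_mem (I.add_mem (I.smul_mem _ he) (I.smul_mem _ hx)) (I.smul_mem _ hy)

end
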